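/- Let M = A₁…Aₙ be a convex polygon such that for each i the circumcenter of triangle A_{i−1}AᵢA_{i+1} lies inside the angle ∠A_{i−1}AᵢA_{i+1}. Let Rᵢ be the circumradius of triangle A_{i−1}AᵢA_{i+1}. Then the cyclic sequence R₁,…,Rₙ has at least two local minima and at least two local maxima (i.e., at least two indices i with Rᵢ ≤ R_{i−1}, R_{i+1}, and at least two with Rᵢ ≥ R_{i−1}, R_{i+1}). -/

import Mathlib

noncomputable def planeDet (u v : ℂ) : ℝ := u.re * v.im - u.im * v.re

def IsConvexPolygon {n : ℕ} (V : ZMod n → ℂ) : Prop :=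
  ∀ i j : ZMod n, j ≠ i → j ≠ i + 1 → 0 < planeDet (V (i + 1) - V i) (V j - V i)

/-- `O i` and `R i` are the circumcenter and circumradius of the triangle
`V (i-1) V i V (i+1)`. -/
def AreCircumData {n : ℕ} (V O : ZMod n → ℂ) (R : ZMod n → ℝ) : Prop :=
  ∀ i : ZMod n, dist (O i) (V (i - 1)) = R i ∧ dist (O i) (V i) = R i ∧
    dist (O i) (V (i + 1)) = R i

/-- Each circumcenter `O i` lies strictly inside the angle `∠ V (i-1) V i V (i+1)`. -/
def CircumcentersInsideAngles {n : ℕ} (V O : ZMod n → ℂ) : Prop :=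
  ∀ i : ZMod n, ∃ a b : ℝ, 0 < a ∧ 0 < b ∧
    O i - V i = a • (V (i - 1) - V i) + b • (V (i + 1) - V i)

/-!
Index the polygon by `ℕ` with period `n`. The circumcentres `O k` and `O (k + 1)` both lie on the
perpendicular bisector of the edge `V k V (k + 1)`, so `O (k + 1) - O k` is `κ k` times that edge
turned by a right angle. Hence the power of any point `x` with respect to circle `k + 1` exceeds
its power with respect to circle `k` by `-2 κ k` times the (scaled) signed distance `side k x` of
`x` to the line of edge `k`; going once around the polygon gives `∑ κ k * side k x = 0` for every
`x`. Comparing the powers of the two centres themselves shows, using that the centres lie inside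
the angles, that `κ k` has the sign of `R (k + 1) - R k`.

If `R` had a single local minimum, `κ` would be positive on one arc of edges and nonpositive on
the complementary arc, nonzero on both. One of the two arcs turns through less than a half-turn,
so some point lies outside all edges of that arc and strictly inside all the others (the meet of
the lines of its extreme edges, or the midpoint of a single edge). At that point every term of
the sum has the same sign and one is nonzero, a contradiction. Maxima are minima of `-R`.
-/

lemma planeDet_anticomm (u v : ℂ) : planeDet u v = -planeDet v u := by
  simp only [planeDet]; ring

@[simp] lemma planeDet_self (u : ℂ) : planeDet u u = 0 := by
  simp only [planeDet]; ring

lemma planeDet_add_right (u v w : ℂ) : planeDet u (v + w) = planeDet u v + planeDet u w := by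
  simp only [planeDet, Complex.add_re, Complex.add_im]; ring

lemma planeDet_sub_right (u v w : ℂ) : planeDet u (v - w) = planeDet u v - planeDet u w := by
  simp only [planeDet, Complex.sub_re, Complex.sub_im]; ring

lemma planeDet_neg_right (u v : ℂ) : planeDet u (-v) = -planeDet u v := by
  simp only [planeDet, Complex.neg_re, Complex.neg_im]; ring

lemma planeDet_smul_right (u v : ℂ) (t : ℝ) : planeDet u (t • v) = t * planeDet u v := by
  simp only [planeDet, Complex.real_smul, Complex.mul_re, Complex.mul_im, Complex.ofReal_re,
    Complex.ofReal_im]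
  ring

lemma planeDet_sub_sub_cyclic (a b c : ℂ) :
    planeDet (b - a) (c - a) = planeDet (c - b) (a - b) := by
  simp only [planeDet, Complex.sub_re, Complex.sub_im]; ring

/-- The Plücker relation among four vectors of the plane. -/
lemma planeDet_mul_planeDet (P Q w Z : ℂ) :
    planeDet P Q * planeDet w Z = planeDet Z Q * planeDet w P + planeDet P Z * planeDet w Q := by
  simp only [planeDet]; ring

lemma planeDet_nonneg_of_mem_cone {P Q Z w : ℂ} (hPQ : 0 < planeDet P Q)
    (hPZ : 0 ≤ planeDet P Z) (hZQ : 0 ≤ planeDet Z Q) (hwP : 0 ≤ planeDet w P)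
    (hwQ : 0 ≤ planeDet w Q) :
    0 ≤ planeDet w Z := by
  refine nonneg_of_mul_nonneg_right ?_ hPQ
  rw [planeDet_mul_planeDet]
  positivity

lemma exists_planeDet_eq_zero_and_eq_zero {u w : ℂ} (h : planeDet u w ≠ 0) (a c : ℂ) :
    ∃ x, planeDet u (x - a) = 0 ∧ planeDet w (x - c) = 0 := by
  have h' : planeDet w u ≠ 0 := by rwa [planeDet_anticomm, neg_ne_zero]
  refine ⟨a + (planeDet w (c - a) / planeDet w u) • u, ?_, ?_⟩
  · rw [add_sub_cancel_left, planeDet_smul_right, planeDet_self, mul_zero]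
  · rw [show a + (planeDet w (c - a) / planeDet w u) • u - c
        = (planeDet w (c - a) / planeDet w u) • u - (c - a) by abel,
      planeDet_sub_right, planeDet_smul_right]
    field_simp
    ring

/-- Two circles through `a` and `b`, with centres `o` and `o'`: the difference of the powers of a
point `x` with respect to them is a multiple of the signed distance from `x` to the line `ab`. -/
lemma power_sub_power (a b o o' x : ℂ) (hab : a ≠ b) (ho : dist o a = dist o b)
    (ho' : dist o' a = dist o' b) :
    (dist x o' ^ 2 - dist o' a ^ 2) - (dist x o ^ 2 - dist o a ^ 2) =
      -2 * (planeDet (b - a) (o' - o) / Complex.normSq (b - a)) * planeDet (b - a) (x - a) := by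
  have hne : Complex.normSq (b - a) ≠ 0 := by simpa [sub_eq_zero] using hab.symm
  have key : Complex.normSq (b - a) *
      ((dist x o' ^ 2 - dist o' a ^ 2) - (dist x o ^ 2 - dist o a ^ 2)) =
      -2 * planeDet (b - a) (o' - o) * planeDet (b - a) (x - a) := by
    have h1 := congrArg (· ^ 2) ho
    have h2 := congrArg (· ^ 2) ho'
    simp only [planeDet, Complex.dist_eq, Complex.sq_norm, Complex.normSq_apply, Complex.sub_re,
      Complex.sub_im] at h1 h2 ⊢
    linear_combination ((b.re - a.re) * (x.re - a.re) + (b.im - a.im) * (x.im - a.im)) * (h1 - h2)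
  field_simp
  linear_combination key

namespace CyclicPolygon

def edge (v : ℕ → ℂ) (k : ℕ) : ℂ := v (k + 1) - v k

/-- Positive iff `x` lies strictly to the left of the directed edge `k`. -/
noncomputable def side (v : ℕ → ℂ) (k : ℕ) (x : ℂ) : ℝ := planeDet (edge v k) (x - v k)

/-- `v` lists, with period `n`, the vertices of a strictly convex polygon in counterclockwise
order: every vertex other than the two endpoints of an edge lies strictly to its left. -/
structure ConvexCycle (n : ℕ) (v : ℕ → ℂ) : Prop where
  periodic : Function.Periodic v n
  side_pos : ∀ k j, k + 2 ≤ j → j < k + n → 0 < side v k (v j)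

variable {n : ℕ} {v : ℕ → ℂ}

lemma side_sub_side (k : ℕ) (x y : ℂ) :
    side v k x - side v k y = planeDet (edge v k) (x - y) := by
  rw [side, side, ← planeDet_sub_right, sub_sub_sub_cancel_right]

@[simp] lemma side_self (k : ℕ) : side v k (v k) = 0 := by simp [side, planeDet]

@[simp] lemma side_succ (k : ℕ) : side v k (v (k + 1)) = 0 := by simp [side, edge]

lemma edge_comp_add (a k : ℕ) : edge (fun j => v (a + j)) k = edge v (a + k) := rfl

lemma side_comp_add (a k : ℕ) (x : ℂ) : side (fun j => v (a + j)) k x = side v (a + k) x := rfl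

namespace ConvexCycle

lemma edge_add_period (hv : ConvexCycle n v) (k : ℕ) : edge v (k + n) = edge v k := by
  simp only [edge, add_right_comm k n 1, hv.periodic _]

lemma side_add_period (hv : ConvexCycle n v) (k : ℕ) (x : ℂ) :
    side v (k + n) x = side v k x := by
  simp only [side, hv.edge_add_period, hv.periodic _]

lemma shift (hv : ConvexCycle n v) (a : ℕ) : ConvexCycle n (fun j => v (a + j)) where
  periodic k := by simp only [← add_assoc, hv.periodic _]
  side_pos k j h1 h2 := hv.side_pos (a + k) (a + j) (by omega) (by omega)

lemma side_nonneg (hv : ConvexCycle n v) {k j : ℕ} (h1 : k ≤ j) (h2 : j ≤ k + n) :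
    0 ≤ side v k (v j) := by
  rcases (show j = k ∨ j = k + 1 ∨ j = k + n ∨ (k + 2 ≤ j ∧ j < k + n) by omega)
    with rfl | rfl | rfl | ⟨h3, h4⟩
  · simp
  · simp
  · simp [hv.periodic k]
  · exact (hv.side_pos k j h3 h4).le

lemma side_pos_of_lt (hv : ConvexCycle n v) {k j : ℕ} (hjk : j < k) (h : k + 2 ≤ j + n) :
    0 < side v k (v j) := by
  rw [← hv.periodic j]
  exact hv.side_pos k _ h (by omega)

lemma side_nonneg_of_le (hv : ConvexCycle n v) {k j : ℕ} (hjk : j ≤ k) (h : k ≤ j + n) :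
    0 ≤ side v k (v j) := by
  rw [← hv.periodic j]
  exact hv.side_nonneg h (by omega)

lemma edge_ne_zero (hv : ConvexCycle n v) (hn : 3 ≤ n) (k : ℕ) : edge v k ≠ 0 := by
  intro h
  have := hv.side_pos k (k + 2) le_rfl (by omega)
  simp [side, planeDet, h] at this

lemma planeDet_edge_succ_pos (hv : ConvexCycle n v) (hn : 3 ≤ n) (k : ℕ) :
    0 < planeDet (edge v k) (edge v (k + 1)) := by
  have h := hv.side_pos k (k + 2) le_rfl (by omega)
  rwa [side, show v (k + 2) - v k = edge v k + edge v (k + 1) by simp only [edge]; ring,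
    ← sub_neg_eq_add, planeDet_sub_right, planeDet_neg_right, planeDet_self, zero_sub,
    neg_neg] at h

/-- Once the edges have turned through at least a half-turn from edge `a`, they stay so until
the polygon closes up: otherwise the vertex `a + j + 1` would be a local minimum of the height
above the line of edge `a`, and its vertex cone could not contain `v a`. -/
lemma planeDet_edge_succ_neg_of_nonpos (hv : ConvexCycle n v) (hn : 3 ≤ n) (a : ℕ) {j : ℕ}
    (hj : 1 ≤ j) (hjn : j + 2 ≤ n) (h : planeDet (edge v a) (edge v (a + j)) ≤ 0) :
    planeDet (edge v a) (edge v (a + j + 1)) < 0 := by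
  rcases hjn.eq_or_lt with hlast | hjn
  · have := hv.planeDet_edge_succ_pos hn (a + j + 1)
    rw [show a + j + 1 + 1 = a + n by omega, hv.edge_add_period, planeDet_anticomm] at this
    linarith
  set t := a + j + 1
  have hback : v (a + j) - v t = -edge v (a + j) := by simp only [edge, t]; ring
  by_contra hpos
  have hcone : 0 ≤ planeDet (edge v a) (v (a + n) - v t) := by
    refine planeDet_nonneg_of_mem_cone (Q := v (a + j) - v t) ?_
      (hv.side_pos t (a + n) (by omega) (by omega)).le ?_ (not_lt.mp hpos) ?_
    · rw [← hv.periodic (a + j)]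
      exact hv.side_pos t _ (by omega) (by omega)
    · rw [← planeDet_sub_sub_cyclic]
      exact (hv.side_pos (a + j) (a + n) (by omega) (by omega)).le
    · rw [hback, planeDet_neg_right]
      linarith
  have hbelow := hv.side_pos a t (by omega) (by omega)
  rw [hv.periodic a, ← neg_sub, planeDet_neg_right] at hcone
  rw [side] at hbelow
  linarith

lemma planeDet_edge_nonpos_of_le (hv : ConvexCycle n v) (hn : 3 ≤ n) (a : ℕ) {j k : ℕ}
    (hj : 1 ≤ j) (hjk : j ≤ k) (hk : k < n) (h : planeDet (edge v a) (edge v (a + j)) ≤ 0) :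
    planeDet (edge v a) (edge v (a + k)) ≤ 0 := by
  induction k, hjk using Nat.le_induction with
  | base => exact h
  | succ k hjk ih =>
    exact (hv.planeDet_edge_succ_neg_of_nonpos hn a (by omega) (by omega) (ih (by omega))).le

/-- Of two complementary arcs of edges, one turns through less than a half-turn. -/
lemma planeDet_edge_pos_or (hv : ConvexCycle n v) (hn : 3 ≤ n) {b : ℕ} (hb : b + 1 < n) :
    (b = 0 ∨ 0 < planeDet (edge v 0) (edge v b)) ∨
      (b + 2 = n ∨ 0 < planeDet (edge v (b + 1)) (edge v (n - 1))) := by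
  by_contra! h
  obtain ⟨⟨hb0, h1⟩, hb2, h2⟩ := h
  have h1' := hv.planeDet_edge_succ_neg_of_nonpos hn 0 (j := b) (by omega) (by omega)
    (by simpa using h1)
  have h2' := hv.planeDet_edge_succ_neg_of_nonpos hn (b + 1) (j := n - b - 2) (by omega) (by omega)
    (by rwa [show b + 1 + (n - b - 2) = n - 1 by omega])
  rw [show b + 1 + (n - b - 2) + 1 = 0 + n by omega, hv.edge_add_period, planeDet_anticomm] at h2'
  simp only [zero_add] at h1'
  linarith

end ConvexCycle

def IsBeyondArc (v : ℕ → ℂ) (n b : ℕ) (x : ℂ) : Prop :=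
  (∀ k ≤ b, side v k x ≤ 0) ∧ ∀ k, b < k → k < n → 0 < side v k x

lemma two_mul_side_midpoint (k : ℕ) (y z : ℂ) :
    2 * side v k ((y + z) / 2) = side v k y + side v k z := by
  simp only [side, planeDet, Complex.sub_re, Complex.sub_im, Complex.div_ofNat_re,
    Complex.div_ofNat_im, Complex.add_re, Complex.add_im]
  ring

lemma planeDet_mul_planeDet_sub_of_side_eq_zero {i j : ℕ} {x : ℂ} (hxi : side v i x = 0)
    (hxj : side v j x = 0) (k : ℕ) (y : ℂ) :
    planeDet (edge v i) (edge v j) * planeDet (edge v k) (x - y) =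
      side v j y * planeDet (edge v k) (edge v i) -
        side v i y * planeDet (edge v k) (edge v j) := by
  rw [planeDet_mul_planeDet, planeDet_anticomm (x - y), ← side_sub_side, ← side_sub_side, hxi,
    hxj]
  ring

namespace ConvexCycle

lemma exists_isBeyondArc_zero (hv : ConvexCycle n v) (hn : 3 ≤ n) :
    ∃ x, IsBeyondArc v n 0 x := by
  refine ⟨(v 0 + v 1) / 2, fun k hk => ?_, fun k hk hkn => ?_⟩ <;>
    have h := two_mul_side_midpoint (v := v) k (v 0) (v 1)
  · obtain rfl : k = 0 := by omega
    simp only [side_self, side_succ, zero_add] at h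
    linarith
  · have h0 := hv.side_nonneg_of_le (j := 0) (k := k) (by omega) (by omega)
    have h1 := hv.side_nonneg_of_le (j := 1) (k := k) (by omega) (by omega)
    rcases (show k + 2 ≤ n ∨ 2 ≤ k by omega) with h2 | h2
    · linarith [hv.side_pos_of_lt (j := 0) (k := k) hk (by omega)]
    · linarith [hv.side_pos_of_lt (j := 1) (k := k) (by omega) (by omega)]

section Apex

variable (hv : ConvexCycle n v) (hn : 3 ≤ n) {b : ℕ} (hbn : b + 2 ≤ n)
  (hturn : 0 < planeDet (edge v 0) (edge v b)) {x : ℂ} (hx0 : side v 0 x = 0)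
  (hxb : side v b x = 0)
include hv hn hbn hturn hx0 hxb

lemma side_neg_of_apex {k : ℕ} (hk : 0 < k) (hkb : k < b) : side v k x < 0 := by
  have hdet0 : planeDet (edge v k) (edge v 0) < 0 := by
    rw [planeDet_anticomm, neg_lt_zero]
    by_contra! h
    have := hv.planeDet_edge_nonpos_of_le hn 0 (j := k) (k := b) hk hkb.le (by omega)
      (by simpa using h)
    simp only [zero_add] at this
    linarith
  have hdetb : 0 ≤ planeDet (edge v k) (edge v b) := by
    have := hv.planeDet_edge_nonpos_of_le hn b (j := n - b) (k := n - b + k) (by omega) (by omega)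
      (by omega) (by rw [show b + (n - b) = 0 + n by omega, hv.edge_add_period, planeDet_anticomm]
                     simpa using hturn.le)
    rw [show b + (n - b + k) = k + n by omega, hv.edge_add_period, planeDet_anticomm] at this
    linarith
  have hP := planeDet_mul_planeDet_sub_of_side_eq_zero hx0 hxb k (v k)
  have hbv : 0 < side v b (v k) := hv.side_pos_of_lt hkb (by omega)
  have h0v := hv.side_nonneg (k := 0) (j := k) (by omega) (by omega)
  have : planeDet (edge v 0) (edge v b) * side v k x < 0 := by
    rw [side, hP]; nlinarith
  exact neg_of_mul_neg_right this hturn.le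

lemma side_pos_of_apex (hb : 1 ≤ b) {k : ℕ} (hbk : b < k) (hkn : k < n) : 0 < side v k x := by
  have hP0 := planeDet_mul_planeDet_sub_of_side_eq_zero hx0 hxb k (v 0)
  have hP1 := planeDet_mul_planeDet_sub_of_side_eq_zero hx0 hxb k (v (b + 1))
  rw [side_self, zero_mul, sub_zero] at hP0
  rw [side_succ, zero_mul, zero_sub] at hP1
  have hx_v0 := side_sub_side (v := v) k x (v 0)
  have hx_v1 := side_sub_side (v := v) k x (v (b + 1))
  by_cases hdet0 : 0 < planeDet (edge v k) (edge v 0)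
  · have hb0 : 0 < side v b (v 0) := hv.side_pos_of_lt (by omega) (by omega)
    have hv0 := hv.side_nonneg_of_le (j := 0) (k := k) (by omega) (by omega)
    have : 0 < planeDet (edge v k) (x - v 0) :=
      pos_of_mul_pos_right (by rw [hP0]; positivity) hturn.le
    linarith
  · have hdetb : planeDet (edge v k) (edge v b) ≤ 0 := by
      have := hv.planeDet_edge_nonpos_of_le hn k (j := n - k) (k := n - k + b) (by omega)
        (by omega) (by omega)
        (by rw [show k + (n - k) = 0 + n by omega, hv.edge_add_period]; simpa using hdet0)
      rwa [show k + (n - k + b) = b + n by omega, hv.edge_add_period] at this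
    have h0b : 0 < side v 0 (v (b + 1)) := hv.side_pos 0 _ (by omega) (by omega)
    rcases (show b + 1 = k ∨ b + 1 < k by omega) with rfl | hbk'
    · have := hv.planeDet_edge_succ_pos hn b
      rw [planeDet_anticomm] at this
      have : 0 < planeDet (edge v (b + 1)) (x - v (b + 1)) :=
        pos_of_mul_pos_right (by rw [hP1]; nlinarith) hturn.le
      rw [side_self] at hx_v1
      linarith
    · have : 0 ≤ planeDet (edge v k) (x - v (b + 1)) :=
        nonneg_of_mul_nonneg_right (by rw [hP1]; nlinarith) hturn
      linarith [hv.side_pos_of_lt hbk' (by omega)]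

end Apex

lemma exists_isBeyondArc_of_turn (hv : ConvexCycle n v) (hn : 3 ≤ n) {b : ℕ} (hb : 1 ≤ b)
    (hbn : b + 2 ≤ n) (hturn : 0 < planeDet (edge v 0) (edge v b)) :
    ∃ x, IsBeyondArc v n b x := by
  obtain ⟨x, hx0, hxb⟩ := exists_planeDet_eq_zero_and_eq_zero hturn.ne' (v 0) (v b)
  refine ⟨x, fun k hk => ?_,
    fun k hbk hkn => hv.side_pos_of_apex hn hbn hturn hx0 hxb hb hbk hkn⟩
  rcases (show k = 0 ∨ k = b ∨ (0 < k ∧ k < b) by omega) with rfl | rfl | ⟨hk0, hkb⟩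
  · exact hx0.le
  · exact hxb.le
  · exact (hv.side_neg_of_apex hn hbn hturn hx0 hxb hk0 hkb).le

lemma exists_isBeyondArc (hv : ConvexCycle n v) (hn : 3 ≤ n) {b : ℕ} (hbn : b + 1 < n)
    (h : b = 0 ∨ 0 < planeDet (edge v 0) (edge v b)) : ∃ x, IsBeyondArc v n b x := by
  rcases h with rfl | h
  · exact hv.exists_isBeyondArc_zero hn
  · exact hv.exists_isBeyondArc_of_turn hn (Nat.pos_of_ne_zero (by rintro rfl; simp at h)) hbn h

lemma exists_isBeyondArc_or (hv : ConvexCycle n v) (hn : 3 ≤ n) {b : ℕ} (hbn : b + 1 < n) :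
    ∃ x, IsBeyondArc v n b x ∨
      ((∀ k ≤ b, 0 < side v k x) ∧ ∀ k, b < k → k < n → side v k x ≤ 0) := by
  rcases hv.planeDet_edge_pos_or hn hbn with h | h
  · obtain ⟨x, hx⟩ := hv.exists_isBeyondArc hn hbn h
    exact ⟨x, Or.inl hx⟩
  · obtain ⟨x, hA, hB⟩ := (hv.shift (b + 1)).exists_isBeyondArc hn (b := n - b - 2) (by omega)
      (by rwa [edge_comp_add, edge_comp_add, show b + 1 + (n - b - 2) = n - 1 by omega,
        show n - b - 2 = 0 ↔ b + 2 = n by omega])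
    refine ⟨x, Or.inr ⟨fun k hk => ?_, fun k hbk hkn => ?_⟩⟩
    · have := hB (k + n - b - 1) (by omega) (by omega)
      rwa [side_comp_add, show b + 1 + (k + n - b - 1) = k + n by omega, hv.side_add_period] at this
    · have := hA (k - b - 1) (by omega)
      rwa [side_comp_add, show b + 1 + (k - b - 1) = k by omega] at this

end ConvexCycle

/-- Forces `c k` acting along the directed edges are in equilibrium: their total torque about
every point vanishes. -/
def IsBalanced (v : ℕ → ℂ) (n : ℕ) (c : ℕ → ℝ) : Prop :=
  ∀ x, ∑ k ∈ Finset.range n, c k * side v k x = 0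

lemma IsBalanced.neg {c : ℕ → ℝ} (hc : IsBalanced v n c) : IsBalanced v n (-c) := fun x => by
  simp only [Pi.neg_apply, neg_mul, Finset.sum_neg_distrib, hc x, neg_zero]

lemma ConvexCycle.not_isBalanced_of_two_sign_changes (hv : ConvexCycle n v) (hn : 3 ≤ n)
    {c : ℕ → ℝ} {b : ℕ} (hbn : b + 1 < n) (hA : ∀ k ≤ b, 0 ≤ c k)
    (hB : ∀ k, b < k → k < n → c k ≤ 0) (hA' : ∃ k ≤ b, 0 < c k)
    (hB' : ∃ k, b < k ∧ k < n ∧ c k < 0) : ¬ IsBalanced v n c := by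
  intro hc
  obtain ⟨x, ⟨hxA, hxB⟩ | ⟨hxA, hxB⟩⟩ := hv.exists_isBeyondArc_or hn hbn
  · refine (Finset.sum_neg' (fun k hk => ?_) ?_).ne (hc x)
    · rcases le_or_gt k b with hkb | hkb
      · exact mul_nonpos_of_nonneg_of_nonpos (hA k hkb) (hxA k hkb)
      · have hkn := Finset.mem_range.mp hk
        exact mul_nonpos_of_nonpos_of_nonneg (hB k hkb hkn) (hxB k hkb hkn).le
    · obtain ⟨k, hbk, hkn, hk⟩ := hB'
      exact ⟨k, Finset.mem_range.mpr hkn, mul_neg_of_neg_of_pos hk (hxB k hbk hkn)⟩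
  · refine (Finset.sum_pos' (fun k hk => ?_) ?_).ne' (hc x)
    · rcases le_or_gt k b with hkb | hkb
      · exact mul_nonneg (hA k hkb) (hxA k hkb).le
      · have hkn := Finset.mem_range.mp hk
        exact mul_nonneg_of_nonpos_of_nonpos (hB k hkb hkn) (hxB k hkb hkn)
    · obtain ⟨k, hkb, hk⟩ := hA'
      exact ⟨k, Finset.mem_range.mpr (by omega), mul_pos hk (hxA k hkb)⟩

lemma exists_rise_fall_of_no_valley {f : ℕ → ℝ} (hn : 2 ≤ n) (hf : f n = f 0)
    (hno : ∀ t, 0 < t → t < n → f t ≤ f (t - 1) → f (t + 1) < f t) :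
    ∃ b, b + 1 < n ∧ (∀ k ≤ b, f k < f (k + 1)) ∧
      (∀ k, b < k → k < n → f (k + 1) ≤ f k) ∧
      ∃ k, b < k ∧ k < n ∧ f (k + 1) < f k := by
  have htel : ∑ k ∈ Finset.range n, (f (k + 1) - f k) = 0 := by
    rw [Finset.sum_range_sub, hf, sub_self]
  have hfall : ∃ m, f (m + 1) ≤ f m := by
    by_contra! h
    exact ((strictMono_nat_of_lt_succ h).lt_iff_lt.mpr (show 0 < n by omega)).ne' hf
  classical
  set m := Nat.find hfall
  have hrise : ∀ k < m, f k < f (k + 1) := fun k hk => not_le.mp (Nat.find_min hfall hk)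
  have hdown : ∀ k, m ≤ k → k < n → f (k + 1) ≤ f k := by
    intro k hmk
    induction k, hmk using Nat.le_induction with
    | base => exact fun _ => Nat.find_spec hfall
    | succ k hmk ih => exact fun hk => (hno (k + 1) (by omega) hk (ih (by omega))).le
  have hmn : m < n := by
    by_contra! h
    exact (Finset.sum_pos (fun k hk => sub_pos.mpr (hrise k (by simp at hk; omega)))
      (by simp; omega)).ne' htel
  have hm0 : 0 < m := by
    by_contra! h0
    have hfall1 := hno 1 Nat.one_pos (by omega) (hdown 0 (by omega) (by omega))
    exact (Finset.sum_neg' (fun k hk => sub_nonpos.mpr (hdown k (by omega) (by simpa using hk)))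
      ⟨1, by simp; omega, sub_neg.mpr hfall1⟩).ne htel
  have hrise_sum : 0 < ∑ k ∈ Finset.range m, (f (k + 1) - f k) :=
    Finset.sum_pos (fun k hk => sub_pos.mpr (hrise k (by simpa using hk))) (by simp; omega)
  rw [← Finset.sum_range_add_sum_Ico _ hmn.le] at htel
  obtain ⟨k, hk, hk'⟩ := Finset.exists_lt_of_sum_lt (g := fun _ => (0 : ℝ))
    (s := Finset.Ico m n) (by simp only [Finset.sum_const_zero]; linarith)
  simp only [Finset.mem_Ico] at hk
  exact ⟨m - 1, by omega, fun k hk => hrise k (by omega), fun k hk hkn => hdown k (by omega) hkn,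
    k, by omega, hk.2, sub_neg.mp hk'⟩

theorem ConvexCycle.exists_valley_of_isBalanced (hv : ConvexCycle n v) (hn : 3 ≤ n)
    {c : ℕ → ℝ} (hc : IsBalanced v n c) {f : ℕ → ℝ} (hf : f n = f 0)
    (hpos : ∀ k, 0 < c k ↔ f k < f (k + 1)) (hneg : ∀ k, c k < 0 ↔ f (k + 1) < f k) :
    ∃ t, 0 < t ∧ t < n ∧ f t ≤ f (t - 1) ∧ f t ≤ f (t + 1) := by
  by_contra! hno
  obtain ⟨b, hbn, hrise, hfall, k, hbk, hkn, hk⟩ :=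
    exists_rise_fall_of_no_valley (by omega) hf hno
  exact hv.not_isBalanced_of_two_sign_changes hn hbn (fun k hk => ((hpos k).2 (hrise k hk)).le)
    (fun k hbk hkn => not_lt.mp fun h => (hfall k hbk hkn).not_gt ((hpos k).1 h))
    ⟨0, Nat.zero_le _, (hpos 0).2 (hrise 0 (Nat.zero_le _))⟩ ⟨k, hbk, hkn, (hneg k).2 hk⟩ hc

/-- When the centres `o k` and `o (k + 1)` both lie on the perpendicular bisector of edge `k`,
`o (k + 1) - o k = centerShift v o k • (I * edge v k)`. -/
noncomputable def centerShift (v o : ℕ → ℂ) (k : ℕ) : ℝ :=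
  planeDet (edge v k) (o (k + 1) - o k) / Complex.normSq (edge v k)

section Circumcenters

variable {o : ℕ → ℂ} {ρ : ℕ → ℝ} (hv : ConvexCycle n v) (hn : 3 ≤ n)
  (hcirc : ∀ k, dist (o k) (v k) = ρ k ∧ dist (o k) (v (k + 1)) = ρ k ∧
    dist (o (k + 1)) (v k) = ρ (k + 1))
include hv hn hcirc

lemma power_succ_sub_power (k : ℕ) (x : ℂ) :
    (dist x (o (k + 1)) ^ 2 - ρ (k + 1) ^ 2) - (dist x (o k) ^ 2 - ρ k ^ 2) =
      -2 * centerShift v o k * side v k x := by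
  obtain ⟨h1, h2, h3⟩ := hcirc k
  rw [← h1, ← h3]
  exact power_sub_power _ _ _ _ x (sub_ne_zero.mp (hv.edge_ne_zero hn k)).symm (h1.trans h2.symm)
    (h3.trans (hcirc (k + 1)).1.symm)

lemma isBalanced_centerShift (ho : o n = o 0) (hρ : ρ n = ρ 0) :
    IsBalanced v n (centerShift v o) := by
  intro x
  have h := Finset.sum_range_sub (fun k => dist x (o k) ^ 2 - ρ k ^ 2) n
  simp only [power_succ_sub_power hv hn hcirc, ho, hρ, sub_self, mul_assoc,
    ← Finset.mul_sum] at h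
  linarith

lemma sq_sub_sq_eq_centerShift_mul (k : ℕ) :
    ρ (k + 1) ^ 2 - ρ k ^ 2 = centerShift v o k * (side v k (o k) + side v k (o (k + 1))) := by
  have h1 := power_succ_sub_power hv hn hcirc k (o k)
  have h2 := power_succ_sub_power hv hn hcirc k (o (k + 1))
  rw [dist_self] at h1 h2
  rw [dist_comm] at h2
  linear_combination (h1 + h2) / (-2)

variable (hin : ∀ k, 0 < side v k (o k) ∧ 0 < side v k (o (k + 1)))
include hin

lemma centerShift_pos_iff (k : ℕ) : 0 < centerShift v o k ↔ ρ k < ρ (k + 1) := by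
  have hρ0 : ∀ j, 0 ≤ ρ j := fun j => (hcirc j).1 ▸ dist_nonneg
  rw [← sq_lt_sq₀ (hρ0 k) (hρ0 (k + 1)), ← sub_pos (a := ρ (k + 1) ^ 2),
    sq_sub_sq_eq_centerShift_mul hv hn hcirc,
    mul_pos_iff_of_pos_right (add_pos (hin k).1 (hin k).2)]

lemma centerShift_neg_iff (k : ℕ) : centerShift v o k < 0 ↔ ρ (k + 1) < ρ k := by
  have hρ0 : ∀ j, 0 ≤ ρ j := fun j => (hcirc j).1 ▸ dist_nonneg
  have hS := add_pos (hin k).1 (hin k).2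
  rw [← sq_lt_sq₀ (hρ0 (k + 1)) (hρ0 k), ← sub_neg (a := ρ (k + 1) ^ 2),
    sq_sub_sq_eq_centerShift_mul hv hn hcirc]
  constructor <;> intro h <;> nlinarith

theorem ConvexCycle.exists_valley_and_peak (ho : o n = o 0) (hρ : ρ n = ρ 0) :
    (∃ t, 0 < t ∧ t < n ∧ ρ t ≤ ρ (t - 1) ∧ ρ t ≤ ρ (t + 1)) ∧
      ∃ t, 0 < t ∧ t < n ∧ ρ (t - 1) ≤ ρ t ∧ ρ (t + 1) ≤ ρ t := by
  have hc := isBalanced_centerShift hv hn hcirc ho hρ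
  refine ⟨hv.exists_valley_of_isBalanced hn hc hρ (centerShift_pos_iff hv hn hcirc hin)
    (centerShift_neg_iff hv hn hcirc hin), ?_⟩
  obtain ⟨t, ht0, htn, h1, h2⟩ := hv.exists_valley_of_isBalanced hn hc.neg (f := -ρ)
    (by simp only [Pi.neg_apply, hρ])
    (fun k => by simp [centerShift_neg_iff hv hn hcirc hin])
    (fun k => by simp [centerShift_pos_iff hv hn hcirc hin])
  exact ⟨t, ht0, htn, neg_le_neg_iff.mp h1, neg_le_neg_iff.mp h2⟩

end Circumcenters

lemma natCast_ne_zero_of_pos_of_lt {s : ℕ} (h0 : 0 < s) (hs : s < n) : (s : ZMod n) ≠ 0 := by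
  rw [Ne, ZMod.natCast_eq_zero_iff]
  exact fun h => absurd (Nat.le_of_dvd h0 h) (by omega)

lemma convexCycle_of_isConvexPolygon {V : ZMod n → ℂ} (hconv : IsConvexPolygon V) (p : ZMod n) :
    ConvexCycle n (fun k : ℕ => V (p + k)) where
  periodic k := by simp only [Nat.cast_add, ZMod.natCast_self, add_zero]
  side_pos k j h1 h2 := by
    obtain ⟨s, rfl⟩ : ∃ s, j = k + 1 + (s + 1) := ⟨j - k - 2, by omega⟩
    have hs : ((s + 1 : ℕ) : ZMod n) ≠ 0 := natCast_ne_zero_of_pos_of_lt (by omega) (by omega)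
    have hs' : (((s + 1) + 1 : ℕ) : ZMod n) ≠ 0 :=
      natCast_ne_zero_of_pos_of_lt (by omega) (by omega)
    push_cast at hs hs'
    simp only [side, edge, Nat.cast_add, Nat.cast_one, ← add_assoc]
    refine hconv (p + k) _ (fun h => hs' ?_) (fun h => hs ?_) <;> linear_combination h

lemma planeDet_circumcenter_pos {V O : ZMod n → ℂ} (hn : 3 ≤ n) (hconv : IsConvexPolygon V)
    (hin : CircumcentersInsideAngles V O) (i : ZMod n) :
    0 < planeDet (V (i + 1) - V i) (O i - V i) ∧
      0 < planeDet (V (i + 1) - V i) (O (i + 1) - V i) := by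
  have h1 : (1 : ZMod n) ≠ 0 := by
    simpa using natCast_ne_zero_of_pos_of_lt (n := n) (s := 1) (by omega) (by omega)
  have h2 : (2 : ZMod n) ≠ 0 := by
    simpa using natCast_ne_zero_of_pos_of_lt (n := n) (s := 2) (by omega) (by omega)
  have hprev := hconv i (i - 1) (fun h => h1 (by linear_combination -h))
    (fun h => h2 (by linear_combination -h))
  have hnext := hconv i (i + 2) (fun h => h2 (by linear_combination h))
    (fun h => h1 (by linear_combination h))
  obtain ⟨a, _, ha, -, hO⟩ := hin i
  obtain ⟨_, b, -, hb, hO'⟩ := hin (i + 1)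
  constructor
  · rw [hO, planeDet_add_right, planeDet_smul_right, planeDet_smul_right, planeDet_self]
    nlinarith
  · rw [show O (i + 1) - V i = (O (i + 1) - V (i + 1)) + (V (i + 1) - V i) by ring, hO',
      add_sub_cancel_right, show i + 1 + 1 = i + 2 by ring,
      show V i - V (i + 1) = -(V (i + 1) - V i) by ring,
      show V (i + 2) - V (i + 1) = (V (i + 2) - V i) - (V (i + 1) - V i) by ring]
    rw [planeDet_add_right, planeDet_add_right, planeDet_smul_right, planeDet_smul_right,
      planeDet_neg_right, planeDet_sub_right (V (i + 1) - V i) (V (i + 2) - V i), planeDet_self]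
    nlinarith

theorem exists_valley_and_peak_of_isConvexPolygon {V O : ZMod n → ℂ} {R : ZMod n → ℝ}
    (hn : 3 ≤ n) (hconv : IsConvexPolygon V) (hcirc : AreCircumData V O R)
    (hin : CircumcentersInsideAngles V O) (p : ZMod n) :
    (∃ t, 0 < t ∧ t < n ∧ R (p + t) ≤ R (p + (t - 1 : ℕ)) ∧
        R (p + t) ≤ R (p + (t + 1 : ℕ))) ∧
      ∃ t, 0 < t ∧ t < n ∧ R (p + (t - 1 : ℕ)) ≤ R (p + t) ∧
        R (p + (t + 1 : ℕ)) ≤ R (p + t) := by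
  refine (convexCycle_of_isConvexPolygon hconv p).exists_valley_and_peak hn
    (o := fun k : ℕ => O (p + k)) (ρ := fun k : ℕ => R (p + k)) (fun k => ?_) (fun k => ?_)
    (by simp only [ZMod.natCast_self, Nat.cast_zero])
    (by simp only [ZMod.natCast_self, Nat.cast_zero])
  · obtain ⟨-, h1, h2⟩ := hcirc (p + k)
    have h3 := (hcirc (p + k + 1)).1
    simp only [Nat.cast_add, Nat.cast_one, ← add_assoc, add_sub_cancel_right] at h3 ⊢
    exact ⟨h1, h2, h3⟩
  · simpa only [side, edge, Nat.cast_add, Nat.cast_one, ← add_assoc] using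
      planeDet_circumcenter_pos hn hconv hin (p + k)

lemma exists_two_valleys [NeZero n] (g : ZMod n → ℝ)
    (h : ∀ p : ZMod n, ∃ t, 0 < t ∧ t < n ∧ g (p + t) ≤ g (p + (t - 1 : ℕ)) ∧
      g (p + t) ≤ g (p + (t + 1 : ℕ))) :
    ∃ i j : ZMod n, i ≠ j ∧ (g i ≤ g (i - 1) ∧ g i ≤ g (i + 1)) ∧
      (g j ≤ g (j - 1) ∧ g j ≤ g (j + 1)) := by
  obtain ⟨p, hp⟩ := Finite.exists_min g
  obtain ⟨t, ht0, htn, h1, h2⟩ := h p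
  refine ⟨p + t, p, by simpa using natCast_ne_zero_of_pos_of_lt ht0 htn, ⟨?_, ?_⟩, hp _,
    hp _⟩
  · rwa [Nat.cast_pred ht0, ← add_sub_assoc] at h1
  · rwa [Nat.cast_succ, ← add_assoc] at h2

end CyclicPolygon

open CyclicPolygon in
/-- **Musin's theorem.** If each circumcenter of three consecutive vertices of a
convex polygon lies inside the corresponding vertex angle, then the cyclic sequence of
circumradii `R i` has at least two local minima and at least two local maxima. -/
theorem circumradii_four_extrema (n : ℕ) [NeZero n] (hn : 4 ≤ n) (V O : ZMod n → ℂ)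
    (R : ZMod n → ℝ) (hconv : IsConvexPolygon V) (hcirc : AreCircumData V O R)
    (hin : CircumcentersInsideAngles V O) :
    (∃ i j : ZMod n, i ≠ j ∧ (R i ≤ R (i - 1) ∧ R i ≤ R (i + 1)) ∧
      (R j ≤ R (j - 1) ∧ R j ≤ R (j + 1))) ∧
    (∃ i j : ZMod n, i ≠ j ∧ (R (i - 1) ≤ R i ∧ R (i + 1) ≤ R i) ∧
      (R (j - 1) ≤ R j ∧ R (j + 1) ≤ R j)) := by
  have key := exists_valley_and_peak_of_isConvexPolygon (by omega) hconv hcirc hin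
  refine ⟨exists_two_valleys R fun p => (key p).1, ?_⟩
  obtain ⟨i, j, hij, hi, hj⟩ := exists_two_valleys (fun i => -R i) fun p => by
    obtain ⟨t, ht0, htn, h1, h2⟩ := (key p).2
    exact ⟨t, ht0, htn, neg_le_neg h1, neg_le_neg h2⟩
  simp only [neg_le_neg_iff] at hi hj
  exact ⟨i, j, hij, hi, hj⟩
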